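/- Let C ⊆ F^m be a 1-code with 0 ∈ C and let Ċ := C \ {0}. Then the neighborhoods Ω(R_ι + ẑι + e^(ι)), for ι ∈ Ċ, are pairwise disjoint. -/

import Mathlib

/-- `F^m`: binary words of length `m`, i.e. the vector space `(Fin m → ZMod 2)` over GF(2). -/
abbrev Fm (m : ℕ) := Fin m → ZMod 2

/-- Index set for `F^n` with `n = 2^m - 1`: the nonzero vectors of `F^m`. -/
abbrev Idx (m : ℕ) := {v : Fm m // v ≠ 0}

/-- `F^n`: binary words of length `n = 2^m - 1`, with coordinates indexed by
nonzero vectors of `F^m`. -/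
abbrev Fn (m : ℕ) := Idx m → ZMod 2

/-- The coordinate of `c : F^n` at index `α : F^m` (junk value `0` when `α = 0`,
which is never used since coordinates are only ever accessed at nonzero indices). -/
def coord {m : ℕ} (c : Fn m) (α : Fm m) : ZMod 2 :=
  if h : α = 0 then 0 else c ⟨α, h⟩

/-- `e^(ι)`: the word of `F^n` with `1` in coordinate `ι` and `0` elsewhere. -/
def eWord {m : ℕ} (ι : Idx m) : Fn m := fun κ => if κ = ι then 1 else 0

/-- `ẑα = (α, 0^{n-m})`: the word of `F^n` whose coordinate at index `κ` equals `α i`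
if `κ = π^(i)` is the `i`-th standard basis vector `Pi.single i 1`, and `0` otherwise. -/
def zhat {m : ℕ} (α : Fm m) : Fn m :=
  fun κ => ∑ i : Fin m, if (κ : Fm m) = Pi.single i 1 then α i else 0

/-- The Hamming code `H = {c ∈ F^n : ∑_{ι ≠ 0} c_ι • ι = 0}`. -/
def hammingCode (m : ℕ) : Set (Fn m) :=
  {c | ∑ ι : Idx m, c ι • (ι : Fm m) = 0}

/-- The linear `ι`-component `R_ι = {c ∈ H : c_α = c_{α+ι} ∀ α ∉ {0, ι}}`. -/
def Rcomp {m : ℕ} (ι : Idx m) : Set (Fn m) :=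
  {c | c ∈ hammingCode m ∧
    ∀ α : Fm m, α ≠ 0 → α ≠ (ι : Fm m) → coord c α = coord c (α + ι)}

/-- The coset `M + z = {c + z : c ∈ M}`. -/
def coset {m : ℕ} (M : Set (Fn m)) (z : Fn m) : Set (Fn m) := (fun c => c + z) '' M

/-- The neighborhood `Ω(M)` of `M ⊆ F^n`: all words at Hamming distance at most 1 from `M`. -/
def nbhd {m : ℕ} (M : Set (Fn m)) : Set (Fn m) :=
  {x | ∃ c ∈ M, hammingDist x c ≤ 1}

/-- A `1`-code: any two distinct elements are at Hamming distance at least 3. -/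
def IsOneCode {ι : Type*} [Fintype ι] (C : Set (ι → ZMod 2)) : Prop :=
  ∀ x ∈ C, ∀ y ∈ C, x ≠ y → 3 ≤ hammingDist x y

/-- A `1`-perfect code in `F^n`: a `1`-code whose radius-1 balls cover all of `F^n`. -/
def IsOnePerfect {m : ℕ} (P : Set (Fn m)) : Prop :=
  IsOneCode P ∧ ∀ x : Fn m, ∃ c ∈ P, hammingDist x c ≤ 1

/-- In characteristic 2, the sum of two distinct vectors is nonzero. -/
lemma add_ne_zero_of_ne' {m : ℕ} {ι κ : Fm m} (h : ι ≠ κ) : ι + κ ≠ 0 := by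
  intro h0
  apply h
  funext i
  have h1 := congrFun h0 i
  have key : ∀ a b : ZMod 2, a + b = 0 → a = b := by decide
  exact key _ _ h1

/-!
If a word `x` lies in both neighbourhoods, the two coset words within distance 1 of `x` are at
distance at most 2 and have equal syndromes (`ẑι` and `e^(ι)` both have syndrome `ι`); since the
Hamming code has minimum distance 3 they coincide: `a + ẑι + e^(ι) = b + ẑκ + e^(κ)` with
`a ∈ R_ι`, `b ∈ R_κ`. Now sum coordinates over the affine plane `{α, α + ι, α + κ, α + ι + κ}` for
`α = π^(i)` with `(ι + κ)_i = 1`. As `a` is invariant under translation by `ι` and `b` under `κ`,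
both contribute `0`. Because `ι`, `κ`, `ι + κ` have weight at least 3 (the 1-code property with
`0 ∈ C`), no point of the plane other than `α` is a unit vector or equals `ι` or `κ`, so the
right-hand sides contribute `ι_i` and `κ_i`, which differ.
-/

lemma add_eq_iff_eq_add_of_zmod_two {G : Type*} [AddCommGroup G] [Module (ZMod 2) G]
    {a b c : G} : a + b = c ↔ a = c + b := by
  rw [← ZModModule.sub_eq_add c b, eq_sub_iff_add_eq]

lemma hammingNorm_add_le {ι β : Type*} [Fintype ι] [AddZeroClass β] [DecidableEq β]
    (x y : ι → β) : hammingNorm (x + y) ≤ hammingNorm x + hammingNorm y := by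
  classical
  refine (Finset.card_le_card fun i hi => ?_).trans (Finset.card_union_le _ _)
  by_contra h
  simp_all

lemma hammingNorm_single {ι β : Type*} [Fintype ι] [DecidableEq ι] [Zero β] [DecidableEq β]
    (i : ι) {b : β} (hb : b ≠ 0) : hammingNorm (Pi.single i b : ι → β) = 1 := by
  simp [hammingNorm, Pi.single_apply, hb, Finset.filter_eq']

lemma three_le_hammingNorm_add {ι : Type*} [Fintype ι] {C : Set (ι → ZMod 2)} (hC : IsOneCode C)
    {x y : ι → ZMod 2} (hx : x ∈ C) (hy : y ∈ C) (hxy : x ≠ y) : 3 ≤ hammingNorm (x + y) := by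
  have := hC x hx y hy hxy
  rwa [hammingDist_eq_hammingNorm, neg_add_eq_sub, ZModModule.sub_eq_add, add_comm] at this

lemma single_one_ne_of_three_le {ι : Type*} [Fintype ι] [DecidableEq ι] {v : ι → ZMod 2}
    (hv : 3 ≤ hammingNorm v) (i : ι) : Pi.single i 1 ≠ v := by
  rintro rfl
  rw [hammingNorm_single i one_ne_zero] at hv
  omega

lemma single_one_add_ne_single_one {ι : Type*} [Fintype ι] [DecidableEq ι] {v : ι → ZMod 2}
    (hv : 3 ≤ hammingNorm v) (i j : ι) : Pi.single i 1 + v ≠ Pi.single j 1 := by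
  intro h
  rw [add_comm, add_eq_iff_eq_add_of_zmod_two] at h
  have := hammingNorm_add_le (Pi.single j (1 : ZMod 2)) (Pi.single i 1)
  rw [← h, hammingNorm_single j one_ne_zero, hammingNorm_single i one_ne_zero] at this
  omega

section

variable {m : ℕ}

def syndrome (m : ℕ) : Fn m →ₗ[ZMod 2] Fm m := Fintype.linearCombination (ZMod 2) Subtype.val

lemma mem_hammingCode_iff {c : Fn m} : c ∈ hammingCode m ↔ syndrome m c = 0 := Iff.rfl

def basisIdx (i : Fin m) : Idx m := ⟨Pi.single i 1, by simp⟩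

lemma zhat_eq_sum (α : Fm m) : zhat α = ∑ i, Pi.single (basisIdx i) (α i) := by
  funext κ
  simp [zhat, Finset.sum_apply, Pi.single_apply, basisIdx, Subtype.ext_iff]

lemma syndrome_zhat (α : Fm m) : syndrome m (zhat α) = α := by
  simp [zhat_eq_sum, syndrome, basisIdx, ← Pi.single_smul', Finset.univ_sum_single]

lemma syndrome_eWord (ι : Idx m) : syndrome m (eWord ι) = ι := by
  have : eWord ι = Pi.single ι 1 := by funext κ; simp [eWord, Pi.single_apply]
  simp [this, syndrome]

lemma eq_zero_of_syndrome_eq_zero {w : Fn m} (hs : syndrome m w = 0) (hw : hammingNorm w ≤ 2) :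
    w = 0 := by
  set s := Finset.univ.filter fun ι : Idx m => w ι ≠ 0
  have hsum : ∑ ι ∈ s, (ι : Fm m) = 0 := by
    refine .trans ?_ hs
    rw [syndrome, Fintype.linearCombination_apply, Finset.sum_filter]
    refine Finset.sum_congr rfl fun ι _ => ?_
    obtain h | h : w ι = 0 ∨ w ι = 1 := by generalize w ι = a; revert a; decide
    all_goals simp [h]
  rw [← hammingNorm_eq_zero]
  change s.card = 0
  obtain h | h | h : s.card = 0 ∨ s.card = 1 ∨ s.card = 2 := by change s.card ≤ 2 at hw; omega
  · exact h
  · obtain ⟨a, ha⟩ := Finset.card_eq_one.mp h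
    rw [ha, Finset.sum_singleton] at hsum
    exact absurd hsum a.2
  · obtain ⟨a, b, hab, hs⟩ := Finset.card_eq_two.mp h
    rw [hs, Finset.sum_pair hab] at hsum
    exact absurd hsum (add_ne_zero_of_ne' (Subtype.coe_ne_coe.mpr hab))

lemma eq_of_syndrome_eq {u v : Fn m} (hs : syndrome m u = syndrome m v)
    (hd : hammingDist u v ≤ 2) : u = v := by
  rw [← sub_eq_zero]
  refine eq_zero_of_syndrome_eq_zero (by rw [map_sub, hs, sub_self]) ?_
  rwa [← neg_add_eq_sub, ← hammingDist_eq_hammingNorm, hammingDist_comm]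

lemma coord_add (c d : Fn m) (α : Fm m) : coord (c + d) α = coord c α + coord d α := by
  unfold coord
  split_ifs <;> simp

lemma coord_eWord (ι : Idx m) (α : Fm m) : coord (eWord ι) α = if α = ι then 1 else 0 := by
  unfold coord eWord
  have := ι.2
  split_ifs <;> simp_all [Subtype.ext_iff]

lemma single_one_injective : Function.Injective fun i : Fin m => (Pi.single i 1 : Fm m) :=
  fun i j h => by simpa [Pi.single_apply, eq_comm] using congrFun h j

lemma coord_zhat_single (α : Fm m) (i : Fin m) : coord (zhat α) (Pi.single i 1) = α i := by
  simp [coord, zhat, single_one_injective.eq_iff]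

lemma coord_zhat_of_forall_ne (α : Fm m) {β : Fm m} (hβ : ∀ i, β ≠ Pi.single i 1) :
    coord (zhat α) β = 0 := by
  unfold coord zhat
  split_ifs
  · rfl
  · exact Finset.sum_eq_zero fun i _ => if_neg (hβ i)

def planeSum (c : Fn m) (α ι κ : Fm m) : ZMod 2 :=
  coord c α + coord c (α + ι) + coord c (α + κ) + coord c (α + ι + κ)

lemma planeSum_add (c d : Fn m) (α ι κ : Fm m) :
    planeSum (c + d) α ι κ = planeSum c α ι κ + planeSum d α ι κ := by
  simp only [planeSum, coord_add]
  ring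

lemma planeSum_comm (c : Fn m) (α ι κ : Fm m) : planeSum c α ι κ = planeSum c α κ ι := by
  rw [planeSum, planeSum, add_right_comm α ι κ]
  ring

lemma planeSum_eq_zero_of_mem_Rcomp {ι : Idx m} {c : Fn m} (hc : c ∈ Rcomp ι) {α κ : Fm m}
    (hα : α ≠ 0) (hαι : α ≠ ι) (hακ : α ≠ κ) (hαικ : α ≠ ι + κ) : planeSum c α ι κ = 0 := by
  have hακ₀ : α + κ ≠ 0 := add_ne_zero_of_ne' hακ
  have hακι : α + κ ≠ ι := fun h => hαικ (add_eq_iff_eq_add_of_zmod_two.mp h)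
  rw [planeSum, hc.2 α hα hαι, add_right_comm α ι κ, ← hc.2 (α + κ) hακ₀ hακι,
    ZModModule.add_self, zero_add, ZModModule.add_self]

lemma planeSum_eWord (ι : Idx m) {α κ : Fm m}
    (hα : α ≠ 0) (hαι : α ≠ ι) (hακ : α ≠ κ) (hαικ : α ≠ ι + κ) :
    planeSum (eWord ι) α ι κ = 0 := by
  simp [planeSum, coord_eWord, add_eq_iff_eq_add_of_zmod_two, ZModModule.add_self, hα, hαι, hακ,
    hαικ, add_right_comm _ κ (ι : Fm m)]

lemma planeSum_zhat_single (δ : Fm m) (i : Fin m) {ι κ : Fm m} (hι : 3 ≤ hammingNorm ι)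
    (hκ : 3 ≤ hammingNorm κ) (hικ : 3 ≤ hammingNorm (ι + κ)) :
    planeSum (zhat δ) (Pi.single i 1) ι κ = δ i := by
  rw [planeSum, coord_zhat_single, add_assoc (Pi.single i 1),
    coord_zhat_of_forall_ne _ (single_one_add_ne_single_one hι i),
    coord_zhat_of_forall_ne _ (single_one_add_ne_single_one hκ i),
    coord_zhat_of_forall_ne _ (single_one_add_ne_single_one hικ i)]
  simp

lemma add_zhat_eWord_ne_of_mem_Rcomp {ι κ : Idx m} (hι : 3 ≤ hammingNorm (ι : Fm m))
    (hκ : 3 ≤ hammingNorm (κ : Fm m)) (hικ : 3 ≤ hammingNorm ((ι : Fm m) + (κ : Fm m)))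
    {a b : Fn m} (ha : a ∈ Rcomp ι) (hb : b ∈ Rcomp κ) :
    a + (zhat ι + eWord ι) ≠ b + (zhat κ + eWord κ) := by
  intro hab
  obtain ⟨i, hi⟩ : ∃ i, ((ι : Fm m) + κ) i ≠ 0 :=
    Function.ne_iff.mp (hammingNorm_pos_iff.mp (by omega))
  have hiι := single_one_ne_of_three_le hι i
  have hiκ := single_one_ne_of_three_le hκ i
  have hiικ := single_one_ne_of_three_le hικ i
  have hiκι : (Pi.single i 1 : Fm m) ≠ κ + ι := add_comm (ι : Fm m) κ ▸ hiικ
  have hi0 : (Pi.single i 1 : Fm m) ≠ 0 := by simp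
  have key := congrArg (planeSum · (Pi.single i 1) ι κ) hab
  simp only [planeSum_add] at key
  rw [planeSum_eq_zero_of_mem_Rcomp ha hi0 hiι hiκ hiικ, planeSum_comm b,
    planeSum_eq_zero_of_mem_Rcomp hb hi0 hiκ hiι hiκι,
    planeSum_zhat_single _ _ hι hκ hικ, planeSum_zhat_single _ _ hι hκ hικ,
    planeSum_eWord ι hi0 hiι hiκ hiικ, planeSum_comm (eWord κ),
    planeSum_eWord κ hi0 hiκ hiι hiκι] at key
  exact hi (by simpa [add_eq_iff_eq_add_of_zmod_two] using key)

end

theorem stmt12_general (m : ℕ) (C : Set (Fm m)) (hC : IsOneCode C)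
    (h0 : (0 : Fm m) ∈ C) :
    ∀ ι κ : Idx m, (ι : Fm m) ∈ C → (κ : Fm m) ∈ C → ι ≠ κ →
      Disjoint (nbhd (coset (Rcomp ι) (zhat (ι : Fm m) + eWord ι)))
        (nbhd (coset (Rcomp κ) (zhat (κ : Fm m) + eWord κ))) := by
  intro ι κ hιC hκC hne
  have hι : 3 ≤ hammingNorm (ι : Fm m) := by simpa using three_le_hammingNorm_add hC hιC h0 ι.2
  have hκ : 3 ≤ hammingNorm (κ : Fm m) := by simpa using three_le_hammingNorm_add hC hκC h0 κ.2
  have hικ := three_le_hammingNorm_add hC hιC hκC (Subtype.coe_ne_coe.mpr hne)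
  rw [Set.disjoint_left]
  rintro x ⟨_, ⟨a, ha, rfl⟩, hxa : hammingDist x (a + _) ≤ 1⟩
    ⟨_, ⟨b, hb, rfl⟩, hxb : hammingDist x (b + _) ≤ 1⟩
  have hab : a + (zhat ι + eWord ι) = b + (zhat κ + eWord κ) := by
    refine eq_of_syndrome_eq ?_ ((hammingDist_triangle_left _ _ x).trans (by omega))
    simp only [map_add, mem_hammingCode_iff.mp ha.1, mem_hammingCode_iff.mp hb.1, syndrome_zhat,
      syndrome_eWord, ZModModule.add_self]
  exact add_zhat_eWord_ne_of_mem_Rcomp hι hκ hικ ha hb hab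

/-- If `C ⊆ F^m` is a 1-code with `0 ∈ C`, then the neighborhoods
`Ω(R_ι + ẑι + e^(ι))`, for `ι ∈ Ċ = C \ {0}`, are pairwise disjoint. -/
theorem stmt12 (m : ℕ) (hm : 1 ≤ m) (C : Set (Fm m)) (hC : IsOneCode C)
    (h0 : (0 : Fm m) ∈ C) :
    ∀ ι κ : Idx m, (ι : Fm m) ∈ C → (κ : Fm m) ∈ C → ι ≠ κ →
      Disjoint (nbhd (coset (Rcomp ι) (zhat (ι : Fm m) + eWord ι)))
        (nbhd (coset (Rcomp κ) (zhat (κ : Fm m) + eWord κ))) :=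
  stmt12_general m C hC h0
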